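/- arXiv:2310.10758 — 3 statements merged into one kernel-verified Lean document; each statement's English description precedes it below -/
import Mathlib

section
/- Let X be a feasible solution of the semidefinite program MT(x, r, Y) for vectors Y = (Y_1, ..., Y_k) in R^d, and let Y' be obtained from Y by replacing the i-th vector with an arbitrary vector Y_i' in R^d. Define X' by setting to zero every entry of X in the row or column indexed by b_i and leaving all other entries unchanged. Then X' is a feasible solution of MT(x, r, Y'). -/
/-- Index set for the SDP `MT(x, r, Y)`: the symbol `1`, then `b_1, …, b_k`,
then `v_1, …, v_d`. -/
abbrev MTIdx (k d : ℕ) := Unit ⊕ Fin k ⊕ Fin d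

def MTone {k d : ℕ} : MTIdx k d := Sum.inl ()
def MTb {k d : ℕ} (i : Fin k) : MTIdx k d := Sum.inr (Sum.inl i)
def MTv {k d : ℕ} (j : Fin d) : MTIdx k d := Sum.inr (Sum.inr j)

/-- Feasibility for the SDP `MT(x, r, Y)`. -/
def MTFeasible {k d : ℕ} (x : Fin d → ℝ) (r : ℝ) (Y : Fin k → Fin d → ℝ)
    (X : Matrix (MTIdx k d) (MTIdx k d) ℝ) : Prop :=
  X.PosSemidef ∧ X MTone MTone = 1 ∧ (∑ j, X (MTv j) (MTv j)) = 1 ∧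
    (∀ i, X (MTb i) (MTb i) = X MTone (MTb i)) ∧
    ∀ i, (∑ j, X (MTb i) (MTv j) * (Y i j - x j)) ≥ r * X (MTb i) (MTb i)

open Matrix in
theorem Matrix.PosSemidef.zero_row_col {n R : Type*} [Fintype n] [DecidableEq n] [Ring R]
    [PartialOrder R] [StarRing R] {X : Matrix n n R} (hX : X.PosSemidef) (b : n) :
    (of fun a c => if a = b ∨ c = b then 0 else X a c).PosSemidef := by
  let P : Matrix n n R := diagonal (Function.update 1 b 0)
  convert hX.mul_mul_conjTranspose_same P using 1
  ext a c
  by_cases ha : a = b <;> by_cases hc : c = b <;>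
    simp [P, ha, hc, diagonal_conjTranspose, Function.update_of_ne]

section MTIdx

variable {k d : ℕ}

@[simp]
theorem MTone_ne_MTb (i : Fin k) : (MTone : MTIdx k d) ≠ MTb i := by
  simp [MTone, MTb]

@[simp]
theorem MTv_ne_MTb (j : Fin d) (i : Fin k) : (MTv j : MTIdx k d) ≠ MTb i := by
  simp [MTv, MTb]

@[simp]
theorem MTb_inj {i i' : Fin k} : (MTb i : MTIdx k d) = MTb i' ↔ i = i' := by
  simp [MTb]

end MTIdx

theorem mtFeasible_zero_row_col_general {k d : ℕ} (x : Fin d → ℝ) (r : ℝ)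
    (Y : Fin k → Fin d → ℝ) (i : Fin k) (Yi' : Fin d → ℝ)
    (X : Matrix (MTIdx k d) (MTIdx k d) ℝ) (hX : MTFeasible x r Y X) :
    MTFeasible x r (Function.update Y i Yi')
      (Matrix.of fun a c => if a = MTb i ∨ c = MTb i then 0 else X a c) := by
  obtain ⟨hpsd, hone, htrace, hdiag, hcon⟩ := hX
  refine ⟨hpsd.zero_row_col (MTb i), by simpa using hone, by simpa using htrace,
    fun i' => ?_, fun i' => ?_⟩
  · rcases eq_or_ne i' i with rfl | hi'
    · simp
    · simpa [hi'] using hdiag i'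
  · rcases eq_or_ne i' i with rfl | hi'
    · simp
    · simpa [hi'] using hcon i'

/-- Zeroing out the row and column indexed by `b i` of a feasible solution of
`MT(x, r, Y)` yields a feasible solution of `MT(x, r, Y')`, where `Y'` is `Y`
with the `i`-th vector replaced by an arbitrary vector `Yi'`. -/
theorem mtFeasible_zero_row_col {k d : ℕ} (x : Fin d → ℝ) (r : ℝ) (hr : 0 < r)
    (Y : Fin k → Fin d → ℝ) (i : Fin k) (Yi' : Fin d → ℝ)
    (X : Matrix (MTIdx k d) (MTIdx k d) ℝ) (hX : MTFeasible x r Y X) :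
    MTFeasible x r (Function.update Y i Yi')
      (Matrix.of fun a c => if a = MTb i ∨ c = MTb i then 0 else X a c) :=
  mtFeasible_zero_row_col_general x r Y i Yi' X hX
end

section
/- (Nesterov) There is a constant K = sqrt(pi/2) <= 2 such that for every matrix M in R^{n x d}, the optimal value m of the semidefinite programming relaxation TOR of the 2-to-1 norm of M satisfies m <= sqrt(pi/2) * ||M||_{2->1}. -/
/-- Index set for the SDP relaxation `TOR`: the symbol `1`, then
`σ_1, …, σ_n`, then `v_1, …, v_d`. -/
abbrev TORIdx (n d : ℕ) := Unit ⊕ Fin n ⊕ Fin d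

def TORone {n d : ℕ} : TORIdx n d := Sum.inl ()
def TORsig {n d : ℕ} (i : Fin n) : TORIdx n d := Sum.inr (Sum.inl i)
def TORv {n d : ℕ} (j : Fin d) : TORIdx n d := Sum.inr (Sum.inr j)

/-- Feasibility for the SDP relaxation `TOR` of the 2-to-1 norm. -/
def TORFeasible {n d : ℕ} (X : Matrix (TORIdx n d) (TORIdx n d) ℝ) : Prop :=
  X.PosSemidef ∧ X TORone TORone = 1 ∧ (∑ j, X (TORv j) (TORv j)) = 1 ∧
    ∀ i, X (TORsig i) (TORsig i) = 1

/-- Optimal value of the SDP relaxation `TOR` for a matrix `M`. -/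
noncomputable def TORval {n d : ℕ} (M : Matrix (Fin n) (Fin d) ℝ) : ℝ :=
  sSup {t | ∃ X, TORFeasible X ∧ t = ∑ i, ∑ j, M i j * X (TORsig i) (TORv j)}

/-- The 2-to-1 norm of a matrix `M`: the maximum over unit vectors `v` of
`‖M v‖₁`. -/
noncomputable def normTwoToOne {n d : ℕ} (M : Matrix (Fin n) (Fin d) ℝ) : ℝ :=
  sSup {t | ∃ v : Fin d → ℝ, (∑ j, (v j) ^ 2) = 1 ∧ t = ∑ i, |∑ j, M i j * v j|}

/-!
Rounding by the signs of Gaussian projections. Write a feasible `X` as a Gram matrix,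
`X_{σ_i,σ_j} = ⟪x_i, x_j⟫`, `X_{σ_i,v_j} = ⟪x_i, y_j⟫`, with unit vectors `x_i` and
`∑ ‖y_j‖² = 1`, and draw a standard Gaussian vector `g`. For a unit vector `x`, `𝔼[sign⟪x, g⟫ ⟪y, g⟫] = √(2/π) ⟪x, y⟫`: the component
of `y` orthogonal to `x` contributes nothing by reflection symmetry, and `𝔼|⟪x, g⟫| = √(2/π)`.
Hence `√(2/π) ∑ M_ij ⟪x_i, y_j⟫ = 𝔼[∑_i sign⟪x_i, g⟫ (M w)_i]` with `w_j = ⟪y_j, g⟫`, which is at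
most `𝔼[‖M w‖₁] ≤ 𝔼[‖w‖] ‖M‖_{2→1} ≤ √(𝔼‖w‖²) ‖M‖_{2→1} = ‖M‖_{2→1}`.
-/

open MeasureTheory ProbabilityTheory Real
open scoped RealInnerProductSpace MatrixOrder ComplexOrder

theorem Matrix.PosSemidef.exists_eq_gram {𝕜 n : Type*} [RCLike 𝕜] [Fintype n]
    {X : Matrix n n 𝕜} (hX : X.PosSemidef) : ∃ v : n → EuclideanSpace 𝕜 n, Matrix.gram 𝕜 v = X := by
  classical
  obtain ⟨B, rfl⟩ := CStarAlgebra.nonneg_iff_eq_star_mul_self.mp hX.nonneg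
  refine ⟨fun a ↦ WithLp.toLp 2 fun k ↦ B k a, ?_⟩
  ext a b
  simp [Matrix.gram_apply, Matrix.mul_apply, PiLp.inner_apply, mul_comm]

section Sqrt

variable {α : Type*} [MeasurableSpace α] {μ : Measure α}

lemma MeasureTheory.Integrable.sqrt [IsFiniteMeasure μ] {f : α → ℝ} (hf : Integrable f μ) :
    Integrable (fun x ↦ √(f x)) μ := by
  refine (hf.abs.add (integrable_const 1)).mono'
    (continuous_sqrt.comp_aestronglyMeasurable hf.1) (ae_of_all _ fun x ↦ ?_)
  rw [norm_of_nonneg (sqrt_nonneg _), Pi.add_apply]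
  refine sqrt_le_iff.mpr ⟨by positivity, ?_⟩
  nlinarith [le_abs_self (f x), abs_nonneg (f x)]

lemma integral_sqrt_le_sqrt_integral [IsProbabilityMeasure μ] {f : α → ℝ} (hf₀ : 0 ≤ᵐ[μ] f)
    (hf : Integrable f μ) : ∫ x, √(f x) ∂μ ≤ √(∫ x, f x ∂μ) :=
  strictConcaveOn_sqrt.concaveOn.le_map_integral continuous_sqrt.continuousOn isClosed_Ici hf₀ hf
    hf.sqrt

end Sqrt

lemma measurable_sign_real : Measurable (fun t : ℝ ↦ (SignType.sign t : ℝ)) :=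
  Monotone.measurable fun a b h ↦ by
    have := (SignType.sign : ℝ →o SignType).monotone h
    generalize SignType.sign a = s at *
    generalize SignType.sign b = s' at *
    cases s <;> cases s' <;> simp_all

lemma abs_sign_real_le_one (t : ℝ) : |(SignType.sign t : ℝ)| ≤ 1 := by
  cases SignType.sign t <;> simp

lemma sign_mul_le_abs (t a : ℝ) : (SignType.sign t : ℝ) * a ≤ |a| :=
  (le_abs_self _).trans <| by
    rw [abs_mul]
    exact mul_le_of_le_one_left (abs_nonneg a) (abs_sign_real_le_one t)

lemma integral_Ioi_mul_exp_neg_mul_sq {b : ℝ} (hb : 0 < b) :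
    ∫ t in Set.Ioi (0 : ℝ), t * exp (-b * t ^ 2) = (2 * b)⁻¹ := by
  have h := integral_mul_cexp_neg_mul_sq (b := (b : ℂ)) (by simpa using hb)
  rw [← Complex.ofReal_ofNat, ← Complex.ofReal_mul, ← Complex.ofReal_inv] at h
  rw [← Complex.ofReal_inj, ← h, ← integral_complex_ofReal]
  congr 1 with t
  push_cast
  rfl

lemma integral_abs_gaussianReal : ∫ t, |t| ∂gaussianReal 0 1 = √(2 / π) := by
  have hpdf : ∀ t, gaussianPDFReal 0 1 t • |t| =
      (√(2 * π))⁻¹ * (|t| * exp (-(1 / 2) * |t| ^ 2)) := fun t ↦ by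
    simp only [gaussianPDFReal, smul_eq_mul, sq_abs, NNReal.coe_one, mul_one, sub_zero]
    ring_nf
  rw [integral_gaussianReal_eq_integral_smul one_ne_zero]
  simp_rw [hpdf]
  rw [integral_comp_abs (f := fun t ↦ (√(2 * π))⁻¹ * (t * exp (-(1 / 2) * t ^ 2))),
    integral_const_mul, integral_Ioi_mul_exp_neg_mul_sq (by norm_num),
    show (2 : ℝ) / π = 2 ^ 2 / (2 * π) by field_simp, sqrt_div' _ (by positivity),
    sqrt_sq zero_le_two]
  ring

section StdGaussian

variable {E : Type*} [NormedAddCommGroup E] [InnerProductSpace ℝ E] [FiniteDimensional ℝ E]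
  [MeasurableSpace E] [BorelSpace E]

lemma stdGaussian_map_inner (a : E) :
    (stdGaussian E).map (fun g ↦ ⟪a, g⟫) = gaussianReal 0 (‖a‖₊ ^ 2) := by
  have h := IsGaussian.map_eq_gaussianReal (μ := stdGaussian E) (innerSL ℝ a)
  rw [integral_strongDual_stdGaussian, variance_dual_stdGaussian, innerSL_apply_norm,
    ← coe_nnnorm, ← NNReal.coe_pow, Real.toNNReal_coe] at h
  exact h

lemma integrable_inner_stdGaussian (a : E) : Integrable (fun g ↦ ⟪a, g⟫) (stdGaussian E) :=
  IsGaussian.integrable_dual _ (innerSL ℝ a)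

lemma integrable_inner_sq_stdGaussian (a : E) : Integrable (fun g ↦ ⟪a, g⟫ ^ 2) (stdGaussian E) :=
  (IsGaussian.memLp_dual _ (innerSL ℝ a) 2 (by simp)).integrable_sq

lemma integral_inner_mul_inner_stdGaussian (a b : E) :
    ∫ g, ⟪a, g⟫ * ⟪b, g⟫ ∂stdGaussian E = ⟪a, b⟫ := by
  have h := covarianceBilin_apply (μ := stdGaussian E) IsGaussian.memLp_two_id a b
  rw [covarianceBilin_stdGaussian, innerSL_apply_apply ℝ] at h
  simpa using h.symm

lemma integral_abs_inner_stdGaussian {x : E} (hx : ‖x‖ = 1) :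
    ∫ g, |⟪x, g⟫| ∂stdGaussian E = √(2 / π) := by
  have hmap := stdGaussian_map_inner x
  rw [← coe_nnnorm, NNReal.coe_eq_one] at hx
  rw [hx, one_pow] at hmap
  rw [← integral_abs_gaussianReal, ← hmap, integral_map (by fun_prop) (by fun_prop)]

/-- The reflection in `ℝ ∙ x` preserves `stdGaussian E`, fixes `⟪x, g⟫` and negates `⟪z, g⟫`. -/
lemma integral_mul_inner_stdGaussian_eq_zero (f : ℝ → ℝ) {x z : E} (h : ⟪x, z⟫ = 0) :
    ∫ g, f ⟪x, g⟫ * ⟪z, g⟫ ∂stdGaussian E = 0 := by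
  set R := (ℝ ∙ x).reflection
  have hRx : ∀ g, ⟪x, R g⟫ = ⟪x, g⟫ := fun g ↦ by
    conv_lhs => rw [← Submodule.reflection_mem_subspace_eq_self
      (Submodule.mem_span_singleton_self (R := ℝ) x)]
    exact R.inner_map_map x g
  have hRz : ∀ g, ⟪z, R g⟫ = -⟪z, g⟫ := fun g ↦ by
    have : R z = -z := Submodule.reflection_mem_subspace_orthogonalComplement_eq_neg
      (Submodule.mem_orthogonal_singleton_iff_inner_right.2 h)
    rw [← R.inner_map_map, this, inner_neg_left, Submodule.reflection_reflection]
  have hinv := integral_map_equiv R.toHomeomorph.toMeasurableEquiv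
    (fun g ↦ f ⟪x, g⟫ * ⟪z, g⟫) (μ := stdGaussian E)
  simp only [Homeomorph.toMeasurableEquiv_coe, LinearIsometryEquiv.coe_toHomeomorph,
    stdGaussian_map R, hRx, hRz, mul_neg, integral_neg] at hinv
  linarith

lemma integrable_sign_inner_mul_inner_stdGaussian (x y : E) :
    Integrable (fun g ↦ (SignType.sign ⟪x, g⟫ : ℝ) * ⟪y, g⟫) (stdGaussian E) :=
  (integrable_inner_stdGaussian y).bdd_mul
    (measurable_sign_real.comp (measurable_const.inner measurable_id)).aestronglyMeasurable
    (ae_of_all _ fun _ ↦ abs_sign_real_le_one _)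

lemma integral_sign_inner_mul_inner_stdGaussian {x : E} (hx : ‖x‖ = 1) (y : E) :
    ∫ g, (SignType.sign ⟪x, g⟫ : ℝ) * ⟪y, g⟫ ∂stdGaussian E = √(2 / π) * ⟪x, y⟫ := by
  set z := y - ⟪x, y⟫ • x
  have hz : ⟪x, z⟫ = 0 := by simp [z, inner_sub_right, inner_smul_right, hx]
  have hsplit : ∀ g, (SignType.sign ⟪x, g⟫ : ℝ) * ⟪y, g⟫ =
      ⟪x, y⟫ * |⟪x, g⟫| + (SignType.sign ⟪x, g⟫ : ℝ) * ⟪z, g⟫ := fun g ↦ by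
    simp only [z, inner_sub_left, inner_smul_left, RCLike.conj_to_real, ← sign_mul_self ⟪x, g⟫]
    ring
  simp_rw [hsplit]
  rw [integral_add ((integrable_inner_stdGaussian x).abs.const_mul _)
      (integrable_sign_inner_mul_inner_stdGaussian x z),
    integral_const_mul, integral_abs_inner_stdGaussian hx,
    integral_mul_inner_stdGaussian_eq_zero (fun t ↦ (SignType.sign t : ℝ)) hz]
  ring

lemma integrable_sum_inner_sq_stdGaussian {ι : Type*} [Fintype ι] (y : ι → E) :
    Integrable (fun g ↦ ∑ j, ⟪y j, g⟫ ^ 2) (stdGaussian E) :=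
  integrable_finsetSum _ fun j _ ↦ integrable_inner_sq_stdGaussian (y j)

lemma integral_sqrt_sum_inner_sq_stdGaussian_le {ι : Type*} [Fintype ι] (y : ι → E) :
    ∫ g, √(∑ j, ⟪y j, g⟫ ^ 2) ∂stdGaussian E ≤ √(∑ j, ‖y j‖ ^ 2) := by
  have hsq : ∫ g, ∑ j, ⟪y j, g⟫ ^ 2 ∂stdGaussian E = ∑ j, ‖y j‖ ^ 2 := by
    rw [integral_finsetSum _ fun j _ ↦ integrable_inner_sq_stdGaussian (y j)]
    simp_rw [sq, integral_inner_mul_inner_stdGaussian, real_inner_self_eq_norm_sq, sq]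
  exact hsq ▸ integral_sqrt_le_sqrt_integral (ae_of_all _ fun g ↦ by positivity)
    (integrable_sum_inner_sq_stdGaussian y)

lemma integral_sum_mul_sign_inner_mul_inner_stdGaussian {ι κ : Type*} [Fintype ι] [Fintype κ]
    (M : Matrix ι κ ℝ) {x : ι → E} (hx : ∀ i, ‖x i‖ = 1) (y : κ → E) :
    ∫ g, ∑ i, ∑ j, M i j * ((SignType.sign ⟪x i, g⟫ : ℝ) * ⟪y j, g⟫) ∂stdGaussian E =
      √(2 / π) * ∑ i, ∑ j, M i j * ⟪x i, y j⟫ := by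
  have hint : ∀ i j, Integrable (fun g ↦ M i j * ((SignType.sign ⟪x i, g⟫ : ℝ) * ⟪y j, g⟫))
      (stdGaussian E) := fun i j ↦ (integrable_sign_inner_mul_inner_stdGaussian _ _).const_mul _
  rw [integral_finsetSum _ fun i _ ↦ integrable_finsetSum _ fun j _ ↦ hint i j, Finset.mul_sum]
  refine Finset.sum_congr rfl fun i _ ↦ ?_
  rw [integral_finsetSum _ fun j _ ↦ hint i j, Finset.mul_sum]
  refine Finset.sum_congr rfl fun j _ ↦ ?_
  rw [integral_const_mul, integral_sign_inner_mul_inner_stdGaussian (hx i)]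
  ring

end StdGaussian

section NormTwoToOne

variable {n d : ℕ}

lemma bddAbove_normTwoToOne (M : Matrix (Fin n) (Fin d) ℝ) :
    BddAbove {t | ∃ v : Fin d → ℝ, (∑ j, (v j) ^ 2) = 1 ∧ t = ∑ i, |∑ j, M i j * v j|} := by
  refine ⟨∑ i, ∑ j, |M i j|, ?_⟩
  rintro _ ⟨v, hv, rfl⟩
  have hvj : ∀ j, |v j| ≤ 1 := fun j ↦ sq_le_one_iff_abs_le_one (v j) |>.mp <|
    hv ▸ Finset.single_le_sum (f := fun j ↦ v j ^ 2) (fun _ _ ↦ sq_nonneg _) (Finset.mem_univ j)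
  refine Finset.sum_le_sum fun i _ ↦ (Finset.abs_sum_le_sum_abs _ _).trans <|
    Finset.sum_le_sum fun j _ ↦ ?_
  rw [abs_mul]
  exact mul_le_of_le_one_right (abs_nonneg _) (hvj j)

lemma normTwoToOne_nonneg (M : Matrix (Fin n) (Fin d) ℝ) : 0 ≤ normTwoToOne M :=
  Real.sSup_nonneg <| by
    rintro _ ⟨v, -, rfl⟩
    positivity

lemma sum_abs_le_sqrt_mul_normTwoToOne (M : Matrix (Fin n) (Fin d) ℝ) (w : Fin d → ℝ) :
    ∑ i, |∑ j, M i j * w j| ≤ √(∑ j, w j ^ 2) * normTwoToOne M := by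
  set s := √(∑ j, w j ^ 2)
  rcases (sqrt_nonneg _ : 0 ≤ s).eq_or_lt with hs | hs
  · have hw : ∀ j, w j = 0 := fun j ↦ pow_eq_zero_iff two_ne_zero |>.mp <|
      (Finset.sum_eq_zero_iff_of_nonneg fun _ _ ↦ sq_nonneg _).mp
        (sqrt_eq_zero'.mp hs.symm |>.antisymm (by positivity)) j (Finset.mem_univ j)
    simp only [hw, mul_zero, Finset.sum_const_zero, abs_zero]
    exact mul_nonneg hs.le (normTwoToOne_nonneg M)
  have hv : ∑ j, (w j / s) ^ 2 = 1 := by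
    simp_rw [div_pow]
    rw [← Finset.sum_div, sq_sqrt (by positivity), div_self (sqrt_pos.mp hs).ne']
  calc ∑ i, |∑ j, M i j * w j| = s * ∑ i, |∑ j, M i j * (w j / s)| := by
        rw [Finset.mul_sum]
        refine Finset.sum_congr rfl fun i _ ↦ ?_
        have : ∑ j, M i j * (w j / s) = (∑ j, M i j * w j) / s := by
          rw [Finset.sum_div]
          simp_rw [mul_div_assoc]
        rw [this, abs_div, abs_of_pos hs, mul_div_cancel₀ _ hs.ne']
    _ ≤ s * normTwoToOne M :=
        mul_le_mul_of_nonneg_left (le_csSup (bddAbove_normTwoToOne M) ⟨_, hv, rfl⟩) hs.le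

end NormTwoToOne

theorem sum_mul_inner_le_sqrt_pi_div_two_mul_normTwoToOne {E : Type*} [NormedAddCommGroup E]
    [InnerProductSpace ℝ E] [FiniteDimensional ℝ E] [MeasurableSpace E] [BorelSpace E] {n d : ℕ}
    (M : Matrix (Fin n) (Fin d) ℝ) {x : Fin n → E} {y : Fin d → E} (hx : ∀ i, ‖x i‖ = 1)
    (hy : ∑ j, ‖y j‖ ^ 2 = 1) :
    ∑ i, ∑ j, M i j * ⟪x i, y j⟫ ≤ √(π / 2) * normTwoToOne M := by
  set K := normTwoToOne M
  have hw_norm : ∫ g, √(∑ j, ⟪y j, g⟫ ^ 2) ∂stdGaussian E ≤ 1 := by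
    simpa [hy] using integral_sqrt_sum_inner_sq_stdGaussian_le y
  have hpointwise : ∀ g, ∑ i, ∑ j, M i j * ((SignType.sign ⟪x i, g⟫ : ℝ) * ⟪y j, g⟫) ≤
      √(∑ j, ⟪y j, g⟫ ^ 2) * K := fun g ↦ calc
    _ = ∑ i, (SignType.sign ⟪x i, g⟫ : ℝ) * ∑ j, M i j * ⟪y j, g⟫ := by
        simp_rw [Finset.mul_sum, mul_left_comm]
    _ ≤ ∑ i, |∑ j, M i j * ⟪y j, g⟫| := Finset.sum_le_sum fun i _ ↦ sign_mul_le_abs _ _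
    _ ≤ √(∑ j, ⟪y j, g⟫ ^ 2) * K := sum_abs_le_sqrt_mul_normTwoToOne M fun j ↦ ⟪y j, g⟫
  have hmain : √(2 / π) * ∑ i, ∑ j, M i j * ⟪x i, y j⟫ ≤ K := calc
    _ = ∫ g, ∑ i, ∑ j, M i j * ((SignType.sign ⟪x i, g⟫ : ℝ) * ⟪y j, g⟫) ∂stdGaussian E :=
        (integral_sum_mul_sign_inner_mul_inner_stdGaussian M hx y).symm
    _ ≤ ∫ g, √(∑ j, ⟪y j, g⟫ ^ 2) * K ∂stdGaussian E :=
        integral_mono (integrable_finsetSum _ fun i _ ↦ integrable_finsetSum _ fun j _ ↦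
            (integrable_sign_inner_mul_inner_stdGaussian _ _).const_mul _)
          ((integrable_sum_inner_sq_stdGaussian y).sqrt.mul_const K)
          hpointwise
    _ = (∫ g, √(∑ j, ⟪y j, g⟫ ^ 2) ∂stdGaussian E) * K := integral_mul_const _ _
    _ ≤ K := mul_le_of_le_one_left (normTwoToOne_nonneg M) hw_norm
  calc ∑ i, ∑ j, M i j * ⟪x i, y j⟫ = √(π / 2) * (√(2 / π) * ∑ i, ∑ j, M i j * ⟪x i, y j⟫) := by
        rw [← mul_assoc, ← sqrt_mul (by positivity), div_mul_div_comm, mul_comm π 2,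
          div_self (by positivity), sqrt_one, one_mul]
    _ ≤ √(π / 2) * K := mul_le_mul_of_nonneg_left hmain (sqrt_nonneg _)

/-- (Nesterov) The constant `K_{2→1} = √(π/2)` is at most `2`, and the optimal
value of the SDP relaxation `TOR` of the 2-to-1 norm of any matrix `M` is at
most `√(π/2)` times the 2-to-1 norm of `M`. -/
theorem torval_le_sqrt_pi_div_two_mul_normTwoToOne {n d : ℕ}
    (M : Matrix (Fin n) (Fin d) ℝ) :
    Real.sqrt (Real.pi / 2) ≤ 2 ∧
      TORval M ≤ Real.sqrt (Real.pi / 2) * normTwoToOne M := by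
  refine ⟨sqrt_le_iff.mpr ⟨zero_le_two, by linarith [pi_le_four]⟩, ?_⟩
  refine Real.sSup_le ?_ (mul_nonneg (sqrt_nonneg _) (normTwoToOne_nonneg M))
  rintro _ ⟨X, ⟨hX, -, hv, hσ⟩, rfl⟩
  obtain ⟨u, rfl⟩ := hX.exists_eq_gram
  simp only [Matrix.gram_apply, real_inner_self_eq_norm_sq] at hv hσ ⊢
  exact sum_mul_inner_le_sqrt_pi_div_two_mul_normTwoToOne M
    (fun i ↦ (pow_eq_one_iff_of_nonneg (norm_nonneg _) two_ne_zero).mp (hσ i)) hv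
end

section
/- Let X be a feasible solution of the semidefinite program MT(mu, r, Y) for vectors Y = (Y_1, ..., Y_k) in R^d. Define a symmetric matrix W in R^{(k+d+1)x(k+d+1)} with rows and columns indexed by 1, sigma_1, ..., sigma_k, v_1, ..., v_d, by: W_{sigma_i, sigma_j} = 4*X_{b_i, b_j} - 2*X_{1, b_i} - 2*X_{1, b_j} + 1, W_{v_i, v_j} = X_{v_i, v_j}, W_{1,1} = 1, W_{1, v_i} = X_{1, v_i}, W_{1, sigma_i} = 2*X_{1, b_i} - 1, and W_{v_i, sigma_j} = 2*X_{v_i, b_j} - X_{1, v_i}. Then W is positive semidefinite and satisfies W_{sigma_i, sigma_i} = 1 for all i and sum_{i=1}^d W_{v_i, v_i} = 1; that is, W is a feasible solution of the semidefinite relaxation TOR. -/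
/-- The matrix `W` constructed from a feasible solution `X` of `MT(μ, r, Y)`:
its rows and columns are indexed by `1, σ_1, …, σ_k, v_1, …, v_d`, where the
index `b_i` of `X` corresponds to the index `σ_i` of `W`. -/
def Wmat {k d : ℕ} (X : Matrix (MTIdx k d) (MTIdx k d) ℝ) :
    Matrix (MTIdx k d) (MTIdx k d) ℝ :=
  Matrix.of fun a c =>
    match a, c with
    | Sum.inl _, Sum.inl _ => 1
    | Sum.inl _, Sum.inr (Sum.inl i) => 2 * X MTone (MTb i) - 1
    | Sum.inl _, Sum.inr (Sum.inr j) => X MTone (MTv j)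
    | Sum.inr (Sum.inl i), Sum.inl _ => 2 * X MTone (MTb i) - 1
    | Sum.inr (Sum.inl i), Sum.inr (Sum.inl i') =>
        4 * X (MTb i) (MTb i') - 2 * X MTone (MTb i) - 2 * X MTone (MTb i') + 1
    | Sum.inr (Sum.inl i), Sum.inr (Sum.inr j) =>
        2 * X (MTv j) (MTb i) - X MTone (MTv j)
    | Sum.inr (Sum.inr j), Sum.inl _ => X MTone (MTv j)
    | Sum.inr (Sum.inr j), Sum.inr (Sum.inl i) =>
        2 * X (MTv j) (MTb i) - X MTone (MTv j)
    | Sum.inr (Sum.inr j), Sum.inr (Sum.inr j') => X (MTv j) (MTv j')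

/-! `W = Aᵀ X A` for the change of variables `A : w ↦ w'`, `w'_1 = w_1 - ∑ i, w_{σ_i}`,
`w'_{b_i} = 2 w_{σ_i}`, `w'_{v_j} = w_{v_j}`, so `W` is positive semidefinite as a congruence
of `X`. The diagonal constraints of `TOR` are those of `MT`, using `X_{b_i, b_i} = X_{1, b_i}`. -/

open Matrix

namespace MTIdx

@[elab_as_elim]
theorem cases {k d : ℕ} {P : MTIdx k d → Prop} (one : P MTone) (b : ∀ i, P (MTb i))
    (v : ∀ j, P (MTv j)) : ∀ a, P a
  | Sum.inl () => one
  | Sum.inr (Sum.inl i) => b i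
  | Sum.inr (Sum.inr j) => v j

variable {R : Type*} [Ring R] {k d : ℕ} {n : Type*}

variable (R k d) in
def torToMT : Matrix (MTIdx k d) (MTIdx k d) R :=
  Matrix.of fun a c =>
    match a, c with
    | Sum.inl _, Sum.inl _ => 1
    | Sum.inl _, Sum.inr (Sum.inl _) => -1
    | Sum.inr (Sum.inl i), Sum.inr (Sum.inl i') => if i = i' then 2 else 0
    | Sum.inr (Sum.inr j), Sum.inr (Sum.inr j') => if j = j' then 1 else 0
    | _, _ => 0

@[simp]
theorem mul_torToMT_apply_one (M : Matrix n (MTIdx k d) R) (a : n) :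
    (M * torToMT R k d) a MTone = M a MTone := by
  simp [mul_apply, torToMT, Fintype.sum_sum_type, MTone]

@[simp]
theorem mul_torToMT_apply_b (M : Matrix n (MTIdx k d) R) (a : n) (i : Fin k) :
    (M * torToMT R k d) a (MTb i) = 2 * M a (MTb i) - M a MTone := by
  simp [mul_apply, torToMT, Fintype.sum_sum_type, MTone, MTb, mul_ite]
  rw [mul_two, two_mul]
  abel

@[simp]
theorem mul_torToMT_apply_v (M : Matrix n (MTIdx k d) R) (a : n) (j : Fin d) :
    (M * torToMT R k d) a (MTv j) = M a (MTv j) := by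
  simp [mul_apply, torToMT, Fintype.sum_sum_type, MTv]

@[simp]
theorem torToMT_transpose_mul_apply_one (M : Matrix (MTIdx k d) n R) (c : n) :
    ((torToMT R k d)ᵀ * M) MTone c = M MTone c := by
  simp [mul_apply, torToMT, Fintype.sum_sum_type, MTone]

@[simp]
theorem torToMT_transpose_mul_apply_b (M : Matrix (MTIdx k d) n R) (c : n) (i : Fin k) :
    ((torToMT R k d)ᵀ * M) (MTb i) c = 2 * M (MTb i) c - M MTone c := by
  simp [mul_apply, torToMT, Fintype.sum_sum_type, MTone, MTb, ite_mul]
  abel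

@[simp]
theorem torToMT_transpose_mul_apply_v (M : Matrix (MTIdx k d) n R) (c : n) (j : Fin d) :
    ((torToMT R k d)ᵀ * M) (MTv j) c = M (MTv j) c := by
  simp [mul_apply, torToMT, Fintype.sum_sum_type, MTv]

end MTIdx

open MTIdx

theorem wmat_eq_transpose_mul_mul {k d : ℕ} {X : Matrix (MTIdx k d) (MTIdx k d) ℝ}
    (hX : X.IsSymm) (h11 : X MTone MTone = 1) :
    Wmat X = (torToMT ℝ k d)ᵀ * X * torToMT ℝ k d := by
  have h11' : X (Sum.inl ()) (Sum.inl ()) = 1 := h11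
  ext a c
  induction a using MTIdx.cases <;> induction c using MTIdx.cases <;>
    simp only [mul_torToMT_apply_one, mul_torToMT_apply_b, mul_torToMT_apply_v,
      torToMT_transpose_mul_apply_one, torToMT_transpose_mul_apply_b,
      torToMT_transpose_mul_apply_v] <;>
    simp only [Wmat, of_apply, MTone, MTb, MTv] <;>
    grind [hX.apply]

theorem wmat_feasible_TOR_general {k d : ℕ} (μ : Fin d → ℝ) (r : ℝ)
    (Y : Fin k → Fin d → ℝ) (X : Matrix (MTIdx k d) (MTIdx k d) ℝ)
    (hX : MTFeasible μ r Y X) :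
    (Wmat X).PosSemidef ∧ Wmat X MTone MTone = 1 ∧
      (∀ i, Wmat X (MTb i) (MTb i) = 1) ∧ (∑ j, Wmat X (MTv j) (MTv j)) = 1 := by
  obtain ⟨hpsd, h11, hv, hb, -⟩ := hX
  refine ⟨?_, rfl, fun i => ?_, hv⟩
  · rw [wmat_eq_transpose_mul_mul (isHermitian_iff_isSymm.mp hpsd.isHermitian) h11,
      ← conjTranspose_eq_transpose_of_trivial]
    exact hpsd.conjTranspose_mul_mul_same _
  · change 4 * X (MTb i) (MTb i) - 2 * X MTone (MTb i) - 2 * X MTone (MTb i) + 1 = 1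
    rw [hb i]
    ring

/-- If `X` is a feasible solution of `MT(μ, r, Y)`, then the matrix `W`
constructed from it is positive semidefinite, has `W_{1,1} = 1`,
`W_{σ_i, σ_i} = 1` for all `i`, and `∑ j, W_{v_j, v_j} = 1`; that is, `W` is a
feasible solution of the SDP relaxation `TOR`. -/
theorem wmat_feasible_TOR {k d : ℕ} (μ : Fin d → ℝ) (r : ℝ) (hr : 0 < r)
    (Y : Fin k → Fin d → ℝ) (X : Matrix (MTIdx k d) (MTIdx k d) ℝ)
    (hX : MTFeasible μ r Y X) :
    (Wmat X).PosSemidef ∧ Wmat X MTone MTone = 1 ∧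
      (∀ i, Wmat X (MTb i) (MTb i) = 1) ∧ (∑ j, Wmat X (MTv j) (MTv j)) = 1 :=
  wmat_feasible_TOR_general μ r Y X hX
end
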